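/- arXiv:1605.07219 — 6 statements merged into one kernel-verified Lean document; each statement's English description precedes it below -/
import Mathlib

section
/- For smooth complex-valued functions φ on an open subset of ℝ² and real-valued functions a₁, a₂, with covariant derivatives D_j φ = ∂_j φ - i a_j φ and field strength f₁₂ = ∂₁a₂ - ∂₂a₁, the pointwise identity |D₁φ|² + |D₂φ|² = |D₁φ + iD₂φ|² + i(∂₁[φ·conj(D₂φ)] - ∂₂[φ·conj(D₁φ)]) + f₁₂|φ|² holds. -/
open Complex

noncomputable def Dcov1 (a₁ : ℝ × ℝ → ℝ) (φ : ℝ × ℝ → ℂ) : ℝ × ℝ → ℂ :=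
  fun x => fderiv ℝ φ x (1, 0) - Complex.I * (a₁ x : ℂ) * φ x

noncomputable def Dcov2 (a₂ : ℝ × ℝ → ℝ) (φ : ℝ × ℝ → ℂ) : ℝ × ℝ → ℂ :=
  fun x => fderiv ℝ φ x (0, 1) - Complex.I * (a₂ x : ℂ) * φ x

noncomputable def fieldStrength (a₁ a₂ : ℝ × ℝ → ℝ) : ℝ × ℝ → ℝ :=
  fun x => fderiv ℝ a₂ x (1, 0) - fderiv ℝ a₁ x (0, 1)

lemma keylem (φ : ℝ × ℝ → ℂ) (a : ℝ × ℝ → ℝ) (x : ℝ × ℝ)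
    (hφx : ContDiffAt ℝ 2 φ x) (hax : ContDiffAt ℝ 1 a x) (w v : ℝ × ℝ) :
    fderiv ℝ (fun y => φ y * starRingEnd ℂ (fderiv ℝ φ y w - Complex.I * (a y : ℂ) * φ y)) x v
      = fderiv ℝ φ x v * starRingEnd ℂ (fderiv ℝ φ x w - Complex.I * (a x : ℂ) * φ x)
        + φ x * starRingEnd ℂ (fderiv ℝ (fderiv ℝ φ) x v w
            - Complex.I * ((fderiv ℝ a x v : ℝ) : ℂ) * φ x
            - Complex.I * (a x : ℂ) * fderiv ℝ φ x v) := by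
  have hdφ : DifferentiableAt ℝ φ x := hφx.differentiableAt two_ne_zero
  have hdφ' : DifferentiableAt ℝ (fderiv ℝ φ) x :=
    (hφx.fderiv_right (m := 1) (by norm_num)).differentiableAt one_ne_zero
  have hda : DifferentiableAt ℝ a x := hax.differentiableAt one_ne_zero
  have haC : HasFDerivAt (fun y => ((a y : ℝ) : ℂ)) (Complex.ofRealCLM.comp (fderiv ℝ a x)) x :=
    Complex.ofRealCLM.hasFDerivAt.comp x hda.hasFDerivAt
  have h1 : HasFDerivAt (fun y => fderiv ℝ φ y w) ((fderiv ℝ (fderiv ℝ φ) x).flip w) x := by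
    have := hdφ'.hasFDerivAt.clm_apply (hasFDerivAt_const w x)
    simpa using this
  have hIa : HasFDerivAt (fun y => Complex.I * ((a y : ℝ) : ℂ))
      (Complex.I • (Complex.ofRealCLM.comp (fderiv ℝ a x))) x := haC.const_mul Complex.I
  have hIaφ : HasFDerivAt (fun y => Complex.I * ((a y : ℝ) : ℂ) * φ y)
      ((Complex.I * ((a x : ℝ) : ℂ)) • fderiv ℝ φ x
        + φ x • (Complex.I • (Complex.ofRealCLM.comp (fderiv ℝ a x)))) x := hIa.mul hdφ.hasFDerivAt
  have hD : HasFDerivAt (fun y => fderiv ℝ φ y w - Complex.I * ((a y : ℝ) : ℂ) * φ y)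
      ((fderiv ℝ (fderiv ℝ φ) x).flip w
        - ((Complex.I * ((a x : ℝ) : ℂ)) • fderiv ℝ φ x
          + φ x • (Complex.I • (Complex.ofRealCLM.comp (fderiv ℝ a x))))) x := h1.sub hIaφ
  have hprod := hdφ.hasFDerivAt.mul hD.star
  simp only [starRingEnd_apply]
  rw [HasFDerivAt.fderiv (f := fun y => φ y * star (fderiv ℝ φ y w - Complex.I * (a y : ℂ) * φ y)) hprod]
  simp [ContinuousLinearMap.smul_apply, ContinuousLinearMap.comp_apply,
    ContinuousLinearMap.flip_apply, star_sub, star_add, star_mul', smul_eq_mul,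
    Complex.star_def, map_mul, Complex.conj_I, Complex.conj_ofReal]
  ring

theorem stmt0 (U : Set (ℝ × ℝ)) (hU : IsOpen U)
    (φ : ℝ × ℝ → ℂ) (a₁ a₂ : ℝ × ℝ → ℝ)
    (hφ : ContDiffOn ℝ (⊤ : ℕ∞) φ U) (ha₁ : ContDiffOn ℝ (⊤ : ℕ∞) a₁ U) (ha₂ : ContDiffOn ℝ (⊤ : ℕ∞) a₂ U) :
    ∀ x ∈ U,
      ((‖Dcov1 a₁ φ x‖ ^ 2 + ‖Dcov2 a₂ φ x‖ ^ 2 : ℝ) : ℂ)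
        = ((‖Dcov1 a₁ φ x + Complex.I * Dcov2 a₂ φ x‖ ^ 2 : ℝ) : ℂ)
          + Complex.I *
            (fderiv ℝ (fun y => φ y * starRingEnd ℂ (Dcov2 a₂ φ y)) x (1, 0)
              - fderiv ℝ (fun y => φ y * starRingEnd ℂ (Dcov1 a₁ φ y)) x (0, 1))
          + ((fieldStrength a₁ a₂ x : ℝ) : ℂ) * ((‖φ x‖ ^ 2 : ℝ) : ℂ) := by
  intro x hx
  have hmem : U ∈ nhds x := hU.mem_nhds hx
  have hφx : ContDiffAt ℝ 2 φ x := (hφ.contDiffAt hmem).of_le (WithTop.coe_le_coe.mpr (le_top : (2:ℕ∞) ≤ ⊤))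
  have ha₁x : ContDiffAt ℝ 1 a₁ x := (ha₁.contDiffAt hmem).of_le (by simp)
  have ha₂x : ContDiffAt ℝ 1 a₂ x := (ha₂.contDiffAt hmem).of_le (by simp)
  have hsymm : IsSymmSndFDerivAt ℝ φ x := hφx.isSymmSndFDerivAt (by simp [minSmoothness_of_isRCLikeNormedField])
  have h2 := keylem φ a₂ x hφx ha₂x (0,1) (1,0)
  have h1 := keylem φ a₁ x hφx ha₁x (1,0) (0,1)
  have hs : fderiv ℝ (fderiv ℝ φ) x (0,1) (1,0) = fderiv ℝ (fderiv ℝ φ) x (1,0) (0,1) :=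
    hsymm.eq (0,1) (1,0)
  simp only [Dcov1, Dcov2, fieldStrength]
  rw [h2, h1, hs]
  push_cast
  simp only [← Complex.mul_conj']
  simp only [map_sub, map_mul, map_add, Complex.conj_I, Complex.conj_ofReal, Complex.conj_conj]
  ring_nf
  simp only [Complex.I_sq, show (Complex.I:ℂ)^3 = -Complex.I by
      rw [pow_succ, Complex.I_sq]; ring,
    show (Complex.I:ℂ)^4 = 1 by rw [show (4:ℕ) = 2*2 from rfl, pow_mul, Complex.I_sq]; norm_num]
  ring
end

section
/- Let N₁, N₂ be positive integers and set u₀(z) = ln(2(N₁+N₂+1)|z|^{2N₁}/(1+|z|^{2(N₁+N₂+1)})) and v₀(z) = ln(2(N₁+N₂+1)|z|^{2N₂}/(1+|z|^{2(N₁+N₂+1)})) for z ∈ ℝ² \ {0}. Then ∫_{ℝ²} e^{u₀+v₀} dx = 4π(N₁+N₂+1). -/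
open MeasureTheory Real

noncomputable def u₀ (N₁ N₂ : ℕ) (z : EuclideanSpace ℝ (Fin 2)) : ℝ :=
  Real.log (2 * (N₁ + N₂ + 1) * ‖z‖ ^ (2 * N₁) / (1 + ‖z‖ ^ (2 * (N₁ + N₂ + 1))))

noncomputable def v₀ (N₁ N₂ : ℕ) (z : EuclideanSpace ℝ (Fin 2)) : ℝ :=
  Real.log (2 * (N₁ + N₂ + 1) * ‖z‖ ^ (2 * N₂) / (1 + ‖z‖ ^ (2 * (N₁ + N₂ + 1))))

/-! In the plane the integrand is radial: with `n = 2N₁ + 2N₂ + 1` and `r = |z|`,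
`e^{u₀+v₀} = (n+1)² r^{n-1} / (1 + r^{n+1})²`. Polar coordinates turn the integral into
`2π (n+1)² ∫₀^∞ rⁿ / (1 + r^{n+1})² dr`, and `rⁿ / (1 + r^{n+1})²` has the antiderivative
`-1 / ((n+1)(1 + r^{n+1}))`, so the integral equals `2π (n+1) = 4π (N₁ + N₂ + 1)`. -/

open Set Filter Topology

lemma integral_Ioi_pow_div_one_add_pow_sq (n : ℕ) :
    ∫ y in Ioi (0 : ℝ), y ^ n / (1 + y ^ (n + 1)) ^ 2 = 1 / ((n : ℝ) + 1) := by
  have hderiv : ∀ y ∈ Ici (0 : ℝ),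
      HasDerivAt (fun y : ℝ => -(((n : ℝ) + 1) * (1 + y ^ (n + 1)))⁻¹)
        (y ^ n / (1 + y ^ (n + 1)) ^ 2) y := by
    intro y hy
    have hpos : 0 < ((n : ℝ) + 1) * (1 + y ^ (n + 1)) := by
      have : 0 ≤ y ^ (n + 1) := pow_nonneg hy _
      positivity
    refine ((((hasDerivAt_pow (n + 1) y).const_add 1).const_mul ((n : ℝ) + 1)).inv
      hpos.ne').neg.congr_deriv ?_
    push_cast
    field_simp
  have hlim : Tendsto (fun y : ℝ => -(((n : ℝ) + 1) * (1 + y ^ (n + 1)))⁻¹) atTop (𝓝 0) := by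
    have h := tendsto_inv_atTop_zero.comp <|
      (tendsto_atTop_add_const_left atTop 1 (tendsto_pow_atTop n.succ_ne_zero)).const_mul_atTop
        (by positivity : (0 : ℝ) < n + 1)
    simpa using h.neg
  rw [integral_Ioi_of_hasDerivAt_of_nonneg' hderiv (fun y hy => by have := hy.out; positivity)
    hlim]
  simp

lemma integral_fun_norm_euclideanSpace_fin_two (f : ℝ → ℝ) :
    ∫ z : EuclideanSpace ℝ (Fin 2), f ‖z‖ = 2 * π * ∫ r in Ioi (0 : ℝ), r * f r := by
  rw [integral_fun_norm_addHaar volume f, finrank_euclideanSpace_fin, measureReal_def,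
    EuclideanSpace.volume_ball_fin_two]
  simp [pi_nonneg, smul_eq_mul, mul_assoc]

lemma exp_u₀_add_v₀ (N₁ N₂ : ℕ) {z : EuclideanSpace ℝ (Fin 2)} (hz : z ≠ 0) :
    exp (u₀ N₁ N₂ z + v₀ N₁ N₂ z) =
      (2 * (N₁ + N₂ + 1)) ^ 2 * ‖z‖ ^ (2 * N₁ + 2 * N₂) /
        (1 + ‖z‖ ^ (2 * (N₁ + N₂ + 1))) ^ 2 := by
  have hr : 0 < ‖z‖ := norm_pos_iff.mpr hz
  rw [u₀, v₀, exp_add, exp_log (by positivity), exp_log (by positivity), div_mul_div_comm,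
    pow_add]
  ring

theorem stmt1_general (N₁ N₂ : ℕ) :
    ∫ z in ({0}ᶜ : Set (EuclideanSpace ℝ (Fin 2))),
        Real.exp (u₀ N₁ N₂ z + v₀ N₁ N₂ z)
      = 4 * Real.pi * (N₁ + N₂ + 1) := by
  set n := 2 * N₁ + 2 * N₂ + 1
  have hn : 2 * (N₁ + N₂ + 1) = n + 1 := by omega
  have hC : 2 * ((N₁ : ℝ) + N₂ + 1) = n + 1 := by push_cast [n]; ring
  let g : ℝ → ℝ := fun r =>
    (2 * (N₁ + N₂ + 1)) ^ 2 * r ^ (2 * N₁ + 2 * N₂) / (1 + r ^ (n + 1)) ^ 2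
  calc _ = ∫ z in ({0}ᶜ : Set (EuclideanSpace ℝ (Fin 2))), g ‖z‖ :=
        setIntegral_congr_fun (measurableSet_singleton 0).compl fun z hz => by
          rw [exp_u₀_add_v₀ N₁ N₂ hz, hn]
    _ = 2 * π * ∫ r in Ioi (0 : ℝ), (n + 1) ^ 2 * (r ^ n / (1 + r ^ (n + 1)) ^ 2) := by
        rw [restrict_compl_singleton, integral_fun_norm_euclideanSpace_fin_two]
        congr 1
        refine setIntegral_congr_fun measurableSet_Ioi fun r _ => ?_
        simp only [g, hC, n, pow_succ']
        ring
    _ = 4 * π * (N₁ + N₂ + 1) := by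
        rw [integral_const_mul, integral_Ioi_pow_div_one_add_pow_sq, ← hC]
        field_simp
        ring

theorem stmt1 (N₁ N₂ : ℕ) (hN₁ : 1 ≤ N₁) (hN₂ : 1 ≤ N₂) :
    ∫ z in ({0}ᶜ : Set (EuclideanSpace ℝ (Fin 2))),
        Real.exp (u₀ N₁ N₂ z + v₀ N₁ N₂ z)
      = 4 * Real.pi * (N₁ + N₂ + 1) :=
  stmt1_general N₁ N₂
end

section
/- Let (u,v) be a C² radial solution of the system -(ru')' = r e^v(e^u+1), -(rv')' = r e^u(e^v-1) for r > 0, with u(r) - 2N₁ ln r = O(1) and v(r) - 2N₂ ln r = O(1) as r → 0⁺, where N₁, N₂ ∈ ℕ. Then for all r > 0: ru'(r) = 2N₁ - ∫₀^r t e^{v(t)}(e^{u(t)}+1) dt and rv'(r) = 2N₂ - ∫₀^r t e^{u(t)}(e^{v(t)}-1) dt. -/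
/-!
Write `F(s) = s w'(s)`. The equation says `F' = -f`, and the logarithmic bounds make `e^u`, `e^v`
bounded near `0`, so the source term `f` is integrable on `(0, r]` and `F(s) → F(r) + ∫₀^r f`
as `s → 0⁺`. If this limit `L` differed from `2N`, then `g = w - 2N log` would satisfy
`s g'(s) → L - 2N ≠ 0`; so `g` would grow like `(L - 2N) log s`, contradicting its boundedness.
-/

open MeasureTheory Real intervalIntegral Set Filter Topology Asymptotics

lemma nonpos_of_tendsto_mul_deriv_of_isBoundedUnder_ge {g g' : ℝ → ℝ} {c : ℝ}
    (hder : ∀ᶠ s in 𝓝[>] 0, HasDerivAt g (g' s) s)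
    (hbdd : IsBoundedUnder (· ≥ ·) (𝓝[>] 0) g)
    (hlim : Tendsto (fun s => s * g' s) (𝓝[>] 0) (𝓝 c)) : c ≤ 0 := by
  by_contra! hc
  obtain ⟨a, ha : 0 < a, hsub⟩ := mem_nhdsGT_iff_exists_Ioo_subset.1
    (hder.and (hlim.eventually (lt_mem_nhds (half_lt_self hc))))
  set φ : ℝ → ℝ := fun s => g s - c / 2 * log s
  have hφ' : ∀ s ∈ Ioo 0 a, HasDerivAt φ (g' s - c / 2 * s⁻¹) s := fun s hs =>
    (hsub hs).1.sub ((hasDerivAt_log hs.1.ne').const_mul _)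
  have hmono : MonotoneOn φ (Ioo 0 a) := by
    refine monotoneOn_of_hasDerivWithinAt_nonneg (f' := fun s => g' s - c / 2 * s⁻¹)
      (convex_Ioo 0 a) (fun s hs => (hφ' s hs).continuousAt.continuousWithinAt) ?_ ?_ <;>
      rw [interior_Ioo]
    · exact fun s hs => (hφ' s hs).hasDerivWithinAt
    · intro s hs
      have := (hsub hs).2
      rw [sub_nonneg, ← div_eq_mul_inv, div_le_iff₀ hs.1]
      linarith
  have hφ : Tendsto φ (𝓝[>] 0) atTop := by
    obtain ⟨C, hC⟩ := hbdd
    simp only [φ, sub_eq_add_neg, ← neg_mul]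
    exact tendsto_atTop_add_left_of_le' _ C hC
      (tendsto_log_nhdsGT_zero.const_mul_atBot_of_neg (by linarith))
  obtain ⟨s, hs, hφs⟩ := (Filter.Eventually.and (Ioo_mem_nhdsGT (half_pos ha))
    (hφ.eventually_gt_atTop (φ (a / 2)))).exists
  have hφle : φ s ≤ φ (a / 2) :=
    hmono ⟨hs.1, hs.2.trans (half_lt_self ha)⟩ ⟨half_pos ha, half_lt_self ha⟩ hs.2.le
  exact hφle.not_gt hφs

lemma tendsto_nhdsGT_zero_of_hasDerivAt {F F' : ℝ → ℝ} {r : ℝ} (hr : 0 < r)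
    (hF : ∀ t ∈ Ioc 0 r, HasDerivAt F (F' t) t) (hint : IntervalIntegrable F' volume 0 r) :
    Tendsto F (𝓝[>] 0) (𝓝 (F r - ∫ t in 0..r, F' t)) := by
  have hprim : Tendsto (fun s => ∫ t in 0..s, F' t) (𝓝[>] 0) (𝓝 0) := by
    have := continuousOn_primitive_interval' hint left_mem_uIcc 0 left_mem_uIcc
    rw [uIcc_of_le hr.le] at this
    simpa using (this.mono_of_mem_nhdsWithin (Icc_mem_nhdsGT hr)).tendsto
  refine (by simpa using (tendsto_const_nhds (x := F r - ∫ t in 0..r, F' t)).add hprim :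
    Tendsto (fun s => F r - (∫ t in 0..r, F' t) + ∫ t in 0..s, F' t) _ _).congr' ?_
  filter_upwards [Ioo_mem_nhdsGT hr] with s hs
  have hsr : IntervalIntegrable F' volume s r :=
    hint.mono_set <| by
      rw [uIcc_of_le hr.le, uIcc_of_le hs.2.le]; exact Icc_subset_Icc hs.1.le le_rfl
  have hFTC : ∫ t in s..r, F' t = F r - F s := integral_eq_sub_of_hasDerivAt
    (fun t ht => hF t (by rw [uIcc_of_le hs.2.le] at ht; exact ⟨hs.1.trans_le ht.1, ht.2⟩)) hsr
  have h0s : IntervalIntegrable F' volume 0 s :=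
    hint.mono_set <| by
      rw [uIcc_of_le hr.le, uIcc_of_le hs.1.le]; exact Icc_subset_Icc le_rfl hs.2.le
  linarith [integral_add_adjacent_intervals h0s hsr]

lemma intervalIntegrable_of_isBigO_one_nhdsGT_zero {f : ℝ → ℝ} {r : ℝ} (hr : 0 < r)
    (hcont : ContinuousOn f (Ioi 0)) (hbdd : f =O[𝓝[>] 0] fun _ => (1 : ℝ)) :
    IntervalIntegrable f volume 0 r := by
  obtain ⟨C, hC⟩ := hbdd.bound
  obtain ⟨a, ⟨ha, har⟩, hsub⟩ := (mem_nhdsGT_iff_exists_mem_Ioc_Ioo_subset hr).1 hC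
  have hnear : IntervalIntegrable f volume 0 a := by
    rw [intervalIntegrable_iff_integrableOn_Ioo_of_le ha.le]
    exact IntegrableOn.of_bound measure_Ioo_lt_top
      ((hcont.mono fun t ht => ht.1).aestronglyMeasurable measurableSet_Ioo) C
      ((ae_restrict_iff' measurableSet_Ioo).2 (ae_of_all _ fun t ht => by simpa using hsub ht))
  have hfar : IntervalIntegrable f volume a r := by
    refine ContinuousOn.intervalIntegrable (hcont.mono ?_)
    rw [uIcc_of_le har]; exact fun t ht => ha.trans_le ht.1
  exact hnear.trans hfar

lemma mul_deriv_eq_sub_integral {w w' f : ℝ → ℝ} {μ C r : ℝ}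
    (hw : ∀ t > 0, HasDerivAt w (w' t) t)
    (hF : ∀ t > 0, HasDerivAt (fun s => s * w' s) (-f t) t)
    (hf : IntervalIntegrable f volume 0 r)
    (hlog : ∀ᶠ t in 𝓝[>] 0, |w t - μ * log t| ≤ C) (hr : 0 < r) :
    r * w' r = μ - ∫ t in 0..r, f t := by
  have hlim : Tendsto (fun s => s * (w' s - μ / s)) (𝓝[>] 0)
      (𝓝 (r * w' r + (∫ t in 0..r, f t) - μ)) := by
    have := tendsto_nhdsGT_zero_of_hasDerivAt hr (fun t ht => hF t ht.1) hf.neg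
    simp only [intervalIntegral.integral_neg, sub_neg_eq_add] at this
    refine (this.sub_const μ).congr' ?_
    filter_upwards [self_mem_nhdsWithin] with s (hs : 0 < s)
    field_simp
  have hder : ∀ᶠ s in 𝓝[>] 0, HasDerivAt (fun t => w t - μ * log t) (w' s - μ / s) s :=
    eventually_nhdsWithin_of_forall fun s (hs : 0 < s) => by
      rw [div_eq_mul_inv]; exact (hw s hs).sub ((hasDerivAt_log hs.ne').const_mul μ)
  have hle := nonpos_of_tendsto_mul_deriv_of_isBoundedUnder_ge hder
    ⟨-C, hlog.mono fun t ht => (abs_le.1 ht).1⟩ hlim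
  have hge := nonpos_of_tendsto_mul_deriv_of_isBoundedUnder_ge (hder.mono fun _ h => h.neg)
    ⟨-C, hlog.mono fun t ht => neg_le_neg (abs_le.1 ht).2⟩
    (by simpa only [mul_neg] using hlim.neg)
  linarith

lemma mul_deriv_eq_sub_integral_of_contDiffOn {w f : ℝ → ℝ} {μ C r : ℝ}
    (hw : ContDiffOn ℝ 2 w (Ioi 0))
    (hODE : ∀ t > 0, deriv (fun s => s * deriv w s) t = -f t)
    (hf : IntervalIntegrable f volume 0 r)
    (hlog : ∀ᶠ t in 𝓝[>] 0, |w t - μ * log t| ≤ C) (hr : 0 < r) :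
    r * deriv w r = μ - ∫ t in 0..r, f t := by
  have hdw : DifferentiableOn ℝ (deriv w) (Ioi 0) :=
    (hw.deriv_of_isOpen isOpen_Ioi (by norm_num)).differentiableOn one_ne_zero
  refine mul_deriv_eq_sub_integral (fun t ht => ?_) (fun t ht => ?_) hf hlog hr
  · exact ((hw.differentiableOn two_ne_zero).differentiableAt (Ioi_mem_nhds ht)).hasDerivAt
  · rw [← hODE t ht]
    exact (differentiableAt_id.mul (hdw.differentiableAt (Ioi_mem_nhds ht))).hasDerivAt

lemma exp_isBigO_one_of_abs_sub_mul_log_le {w : ℝ → ℝ} {μ C : ℝ} (hμ : 0 ≤ μ)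
    (hlog : ∀ᶠ t in 𝓝[>] 0, |w t - μ * log t| ≤ C) :
    (fun t => exp (w t)) =O[𝓝[>] 0] fun _ => (1 : ℝ) := by
  refine IsBigO.of_bound (exp C) ?_
  filter_upwards [hlog, Ioo_mem_nhdsGT one_pos] with t ht ht1
  have : μ * log t ≤ 0 := mul_nonpos_of_nonneg_of_nonpos hμ (log_nonpos ht1.1.le ht1.2.le)
  simpa using exp_le_exp.2 (by linarith [(abs_le.1 ht).2] : w t ≤ C)

theorem stmt4 (N₁ N₂ : ℕ) (u v : ℝ → ℝ)
    (hu : ContDiffOn ℝ 2 u (Set.Ioi 0)) (hv : ContDiffOn ℝ 2 v (Set.Ioi 0))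
    (hODEu : ∀ r > (0 : ℝ),
      deriv (fun s => s * deriv u s) r = -(r * Real.exp (v r) * (Real.exp (u r) + 1)))
    (hODEv : ∀ r > (0 : ℝ),
      deriv (fun s => s * deriv v s) r = -(r * Real.exp (u r) * (Real.exp (v r) - 1)))
    (hu0 : ∃ C ε, 0 < ε ∧ ∀ r ∈ Set.Ioo (0 : ℝ) ε, |u r - 2 * N₁ * Real.log r| ≤ C)
    (hv0 : ∃ C ε, 0 < ε ∧ ∀ r ∈ Set.Ioo (0 : ℝ) ε, |v r - 2 * N₂ * Real.log r| ≤ C) :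
    ∀ r > (0 : ℝ),
      (r * deriv u r = 2 * N₁ - ∫ t in (0 : ℝ)..r, t * Real.exp (v t) * (Real.exp (u t) + 1)) ∧
      (r * deriv v r = 2 * N₂ - ∫ t in (0 : ℝ)..r, t * Real.exp (u t) * (Real.exp (v t) - 1)) := by
  intro r hr
  obtain ⟨Cu, εu, hεu, hCu⟩ := hu0
  obtain ⟨Cv, εv, hεv, hCv⟩ := hv0
  have hu_log : ∀ᶠ t in 𝓝[>] 0, |u t - 2 * N₁ * log t| ≤ Cu :=
    mem_nhdsGT_iff_exists_Ioo_subset.2 ⟨εu, hεu, hCu⟩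
  have hv_log : ∀ᶠ t in 𝓝[>] 0, |v t - 2 * N₂ * log t| ≤ Cv :=
    mem_nhdsGT_iff_exists_Ioo_subset.2 ⟨εv, hεv, hCv⟩
  have heu := exp_isBigO_one_of_abs_sub_mul_log_le (by positivity) hu_log
  have hev := exp_isBigO_one_of_abs_sub_mul_log_le (by positivity) hv_log
  have hid : (fun t : ℝ => t) =O[𝓝[>] 0] fun _ => (1 : ℝ) :=
    ((continuous_id.tendsto 0).mono_left nhdsWithin_le_nhds).isBigO_one ℝ
  have hcu := hu.continuousOn
  have hcv := hv.continuousOn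
  constructor
  · refine mul_deriv_eq_sub_integral_of_contDiffOn hu hODEu
      (intervalIntegrable_of_isBigO_one_nhdsGT_zero hr (by fun_prop) ?_) hu_log hr
    simpa using (hid.mul hev).mul (heu.add (isBigO_refl _ _))
  · refine mul_deriv_eq_sub_integral_of_contDiffOn hv hODEv
      (intervalIntegrable_of_isBigO_one_nhdsGT_zero hr (by fun_prop) ?_) hv_log hr
    simpa using (hid.mul heu).mul (hev.sub (isBigO_refl _ _))
end

section
/- Let (u,v) be a radial solution of -(ru')' = r e^v(e^u+1), -(rv')' = r e^u(e^v-1) on (0,∞) with u - 2N₁ ln r and v - 2N₂ ln r bounded near 0. Then for every r > 0 the Pohozaev identity holds: 2∫₀^r t e^{u+v} dt = 4(N₁+1)(N₂+1) - (ru'(r)+2)(rv'(r)+2) - r²(e^{u(r)+v(r)} + e^{v(r)} - e^{u(r)}). -/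
/-!
The Pohozaev function `P s = (s u' + 2) (s v' + 2) + s² (e^(u+v) + e^v - e^u)` satisfies
`P' = -2 s e^(u+v)` by the two equations, so the identity is the fundamental theorem of calculus
on `(0, r]` once `P (0+) = 4 (N₁ + 1) (N₂ + 1)` is known; since `P` is nonincreasing, the
integrand is integrable up to `0` for free.

For the limit: the bounds on `u - 2 N₁ log` and `v - 2 N₂ log` keep `e^u` and `e^v` bounded near
`0`, so `(s u')'` is bounded and `s u'` has a limit `L` at `0+`. If `L ≠ 2 N₁`, then
`s (u - 2 N₁ log s)'` stays away from `0`, which forces `u - 2 N₁ log s` to diverge like a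
multiple of `log s`, contradicting its boundedness.
-/

open MeasureTheory Real intervalIntegral

open Filter Topology Set Asymptotics

theorem tendsto_nhdsGT_of_abs_deriv_le {w : ℝ → ℝ} {a b M : ℝ} (hab : a < b)
    (hd : ∀ x ∈ Ioc a b, DifferentiableAt ℝ w x) (hM : ∀ x ∈ Ioc a b, |deriv w x| ≤ M) :
    Tendsto w (𝓝[>] a) (𝓝 (w b - ∫ x in a..b, deriv w x)) := by
  have hint : IntervalIntegrable (deriv w) volume a b := by
    refine (intervalIntegrable_iff_integrableOn_Ioc_of_le hab.le).2 ?_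
    exact Measure.integrableOn_of_bounded (by simp) (measurable_deriv w).aestronglyMeasurable
      ((ae_restrict_iff' measurableSet_Ioc).2 (ae_of_all _ hM))
  have hftc : ∀ x ∈ Ioc a b, w x = w b - ∫ t in x..b, deriv w t := fun x hx => by
    have hsub : uIcc x b ⊆ Ioc a b := by
      rw [uIcc_of_le hx.2]; exact Icc_subset_Ioc_iff hx.2 |>.2 ⟨hx.1, le_rfl⟩
    rw [integral_deriv_eq_sub (fun y hy => hd y (hsub hy)) (hint.mono_set (by
      rw [uIcc_of_le hab.le]; exact hsub.trans Ioc_subset_Icc_self))]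
    ring
  have hprim :
      Tendsto (fun x => ∫ t in x..b, deriv w t) (𝓝[>] a) (𝓝 (∫ t in a..b, deriv w t)) := by
    have := continuousOn_primitive_interval_left
      ((intervalIntegrable_iff' (μ := volume)).1 hint) a left_mem_uIcc
    rw [uIcc_of_le hab.le, ContinuousWithinAt, nhdsWithin_Icc_eq_nhdsGE hab] at this
    exact this.mono_left (nhdsWithin_mono _ Ioi_subset_Ici_self)
  refine (tendsto_const_nhds.sub hprim).congr' ?_
  filter_upwards [Ioc_mem_nhdsGT hab] with x hx using (hftc x hx).symm

theorem tendsto_atBot_of_le_mul_deriv {h : ℝ → ℝ} {c : ℝ} (hc : 0 < c)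
    (hd : ∀ᶠ t in 𝓝[>] 0, DifferentiableAt ℝ h t)
    (hle : ∀ᶠ t in 𝓝[>] 0, c ≤ t * deriv h t) :
    Tendsto h (𝓝[>] 0) atBot := by
  obtain ⟨η, hη : 0 < η, hsub⟩ := mem_nhdsGT_iff_exists_Ioo_subset.1 (hd.and hle)
  have hmono : MonotoneOn (fun t => h t - c * log t) (Ioo 0 η) := by
    refine monotoneOn_of_hasDerivWithinAt_nonneg (convex_Ioo 0 η)
      (f' := fun t => deriv h t - c * t⁻¹) ?_ ?_ ?_
    · exact fun t ht => ((hsub ht).1.continuousAt.sub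
        ((continuousAt_log ht.1.ne').const_mul c)).continuousWithinAt
    · rw [interior_Ioo]
      exact fun t ht => ((hsub ht).1.hasDerivAt.sub
        ((hasDerivAt_log ht.1.ne').const_mul c)).hasDerivWithinAt
    · rw [interior_Ioo]
      intro t ht
      have := (hsub ht).2
      rw [sub_nonneg, ← div_eq_mul_inv, div_le_iff₀ ht.1]
      linarith
  have hbelow : ∀ t ∈ Ioo 0 (η / 2), h t ≤ h (η / 2) + c * (log t - log (η / 2)) := by
    intro t ht
    have := hmono ⟨ht.1, ht.2.trans (by linarith)⟩ ⟨by positivity, by linarith⟩ ht.2.le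
    linarith
  refine tendsto_atBot_mono' _ (eventually_of_mem (Ioo_mem_nhdsGT (by positivity)) hbelow) ?_
  exact tendsto_atBot_add_const_left _ _ <| Tendsto.const_mul_atBot hc <|
    tendsto_atBot_add_const_right _ _ tendsto_log_nhdsGT_zero

theorem nonpos_of_tendsto_mul_deriv {h : ℝ → ℝ} {c C : ℝ}
    (hd : ∀ᶠ t in 𝓝[>] 0, DifferentiableAt ℝ h t) (hb : ∀ᶠ t in 𝓝[>] 0, C ≤ h t)
    (hc : Tendsto (fun t => t * deriv h t) (𝓝[>] 0) (𝓝 c)) : c ≤ 0 := by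
  by_contra! hpos
  have hbot := tendsto_atBot_of_le_mul_deriv (half_pos hpos) hd
    ((hc.eventually (lt_mem_nhds (half_lt_self hpos))).mono fun t ht => ht.le)
  obtain ⟨t, ht, hlt⟩ := (hb.and (hbot.eventually_lt_atBot C)).exists
  linarith

theorem eq_zero_of_tendsto_mul_deriv {h : ℝ → ℝ} {c C : ℝ}
    (hd : ∀ᶠ t in 𝓝[>] 0, DifferentiableAt ℝ h t) (hb : ∀ᶠ t in 𝓝[>] 0, |h t| ≤ C)
    (hc : Tendsto (fun t => t * deriv h t) (𝓝[>] 0) (𝓝 c)) : c = 0 := by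
  refine le_antisymm (nonpos_of_tendsto_mul_deriv hd (C := -C) ?_ hc) ?_
  · exact hb.mono fun t ht => by linarith [neg_abs_le (h t)]
  · refine neg_nonpos.1 (nonpos_of_tendsto_mul_deriv (h := -h) (C := -C)
      (hd.mono fun t ht => ht.neg) (hb.mono fun t ht => ?_) ?_)
    · simp only [Pi.neg_apply]
      linarith [le_abs_self (h t)]
    · simpa only [deriv.neg, mul_neg] using hc.neg

theorem ContDiffOn.differentiableAt_mul_deriv {f : ℝ → ℝ} (hf : ContDiffOn ℝ 2 f (Ioi 0))
    {x : ℝ} (hx : 0 < x) : DifferentiableAt ℝ (fun s => s * deriv f s) x :=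
  differentiableAt_id.mul <| ((hf.deriv_of_isOpen isOpen_Ioi (by norm_num)).differentiableOn
    one_ne_zero).differentiableAt (Ioi_mem_nhds hx)

theorem tendsto_mul_deriv_of_abs_sub_mul_log_le {f : ℝ → ℝ} {N C : ℝ}
    (hf : ContDiffOn ℝ 2 f (Ioi 0))
    (hbd : deriv (fun s => s * deriv f s) =O[𝓝[>] 0] (fun _ => (1 : ℝ)))
    (hlog : ∀ᶠ t in 𝓝[>] 0, |f t - N * log t| ≤ C) :
    Tendsto (fun s => s * deriv f s) (𝓝[>] 0) (𝓝 N) := by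
  have hpos : ∀ᶠ t in 𝓝[>] (0 : ℝ), 0 < t := self_mem_nhdsWithin
  obtain ⟨M, hM⟩ := hbd.bound
  obtain ⟨b, hb, hsub⟩ := mem_nhdsGT_iff_exists_Ioc_subset.1 (hM.and hpos)
  have hL := tendsto_nhdsGT_of_abs_deriv_le hb
    (fun x hx => hf.differentiableAt_mul_deriv (hsub hx).2)
    (fun x hx => by simpa using (hsub hx).1)
  set L := b * deriv f b - ∫ x in (0 : ℝ)..b, deriv (fun s => s * deriv f s) x
  have hderiv : ∀ᶠ t in 𝓝[>] 0,
      HasDerivAt (fun t => f t - N * log t) (deriv f t - N * t⁻¹) t :=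
    hpos.mono fun t ht => (((hf.differentiableOn (by norm_num)).differentiableAt
      (Ioi_mem_nhds ht)).hasDerivAt).sub ((hasDerivAt_log ht.ne').const_mul N)
  have hslope : Tendsto (fun t => t * deriv (fun t => f t - N * log t) t) (𝓝[>] 0)
      (𝓝 (L - N)) := by
    refine (hL.sub_const N).congr' ?_
    filter_upwards [hpos, hderiv] with t ht hdt
    rw [hdt.deriv]
    field_simp
  have := eq_zero_of_tendsto_mul_deriv (hderiv.mono fun t ht => ht.differentiableAt) hlog hslope
  rwa [show L = N by linarith] at hL

theorem integral_eq_sub_of_hasDerivAt_of_nonneg_of_tendsto {f f' : ℝ → ℝ} {a b fa : ℝ}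
    (hab : a < b) (hderiv : ∀ x ∈ Ioc a b, HasDerivAt f (f' x) x)
    (hpos : ∀ x ∈ Ioo a b, 0 ≤ f' x) (ha : Tendsto f (𝓝[>] a) (𝓝 fa)) :
    ∫ y in a..b, f' y = f b - fa := by
  classical
  have hcont : ContinuousOn (Function.update f a fa) (Icc a b) := by
    rw [continuousOn_update_iff, Icc_sdiff_left]
    exact ⟨fun x hx => (hderiv x hx).continuousAt.continuousWithinAt,
      fun _ => ha.mono_left (nhdsWithin_mono _ Ioc_subset_Ioi_self)⟩
  have hderiv' : ∀ x ∈ Ioo a b, HasDerivAt (Function.update f a fa) (f' x) x := fun x hx =>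
    (hderiv x (Ioo_subset_Ioc_self hx)).congr_of_eventuallyEq <| by
      filter_upwards [Ioi_mem_nhds hx.1] with y hy using Function.update_of_ne hy.ne' _ _
  have hint := integrableOn_deriv_of_nonneg hcont hderiv' hpos
  simpa [hab.ne'] using integral_eq_sub_of_hasDerivAt_of_le hab.le hcont hderiv'
    ((intervalIntegrable_iff_integrableOn_Ioc_of_le hab.le).2 hint)

theorem isBigO_exp_one_of_abs_sub_mul_log_le {f : ℝ → ℝ} {N C : ℝ} (hN : 0 ≤ N)
    (h : ∀ᶠ t in 𝓝[>] 0, |f t - N * log t| ≤ C) :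
    (fun t => exp (f t)) =O[𝓝[>] 0] (fun _ => (1 : ℝ)) := by
  refine (isBigO_one_iff ℝ).2 (isBoundedUnder_of_eventually_le (a := exp C) ?_)
  filter_upwards [h, Ioo_mem_nhdsGT one_pos] with t ht ht1
  have : N * log t ≤ 0 := mul_nonpos_of_nonneg_of_nonpos hN (log_nonpos ht1.1.le ht1.2.le)
  rw [norm_of_nonneg (exp_pos _).le, exp_le_exp]
  linarith [le_abs_self (f t - N * log t)]

noncomputable def pohozaev (u v : ℝ → ℝ) (s : ℝ) : ℝ :=
  (s * deriv u s + 2) * (s * deriv v s + 2) + s ^ 2 * (exp (u s + v s) + exp (v s) - exp (u s))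

theorem hasDerivAt_pohozaev {u v : ℝ → ℝ} {x : ℝ} (hx : 0 < x)
    (hu : ContDiffOn ℝ 2 u (Ioi 0)) (hv : ContDiffOn ℝ 2 v (Ioi 0))
    (hODEu : deriv (fun s => s * deriv u s) x = -(x * exp (v x) * (exp (u x) + 1)))
    (hODEv : deriv (fun s => s * deriv v s) x = -(x * exp (u x) * (exp (v x) - 1))) :
    HasDerivAt (pohozaev u v) (-(2 * x * exp (u x + v x))) x := by
  have hu' := ((hu.contDiffAt (Ioi_mem_nhds hx)).differentiableAt (by norm_num)).hasDerivAt
  have hv' := ((hv.contDiffAt (Ioi_mem_nhds hx)).differentiableAt (by norm_num)).hasDerivAt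
  have hwu := (hu.differentiableAt_mul_deriv hx).hasDerivAt
  have hwv := (hv.differentiableAt_mul_deriv hx).hasDerivAt
  rw [hODEu] at hwu
  rw [hODEv] at hwv
  have hsq : HasDerivAt (fun s : ℝ => s ^ 2) (2 * x) x := by simpa using hasDerivAt_pow 2 x
  have hexp := ((hu'.add hv').exp.add hv'.exp).sub hu'.exp
  refine (((hwu.add_const 2).mul (hwv.add_const 2)).add (hsq.mul hexp)).congr_deriv ?_
  simp only [Pi.add_apply, Pi.sub_apply, exp_add]
  ring

theorem tendsto_pohozaev {u v : ℝ → ℝ} {a b : ℝ}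
    (hu : Tendsto (fun s => s * deriv u s) (𝓝[>] 0) (𝓝 a))
    (hv : Tendsto (fun s => s * deriv v s) (𝓝[>] 0) (𝓝 b))
    (heu : (fun t => exp (u t)) =O[𝓝[>] 0] (fun _ => (1 : ℝ)))
    (hev : (fun t => exp (v t)) =O[𝓝[>] 0] (fun _ => (1 : ℝ))) :
    Tendsto (pohozaev u v) (𝓝[>] 0) (𝓝 ((a + 2) * (b + 2))) := by
  have hsq : Tendsto (fun s : ℝ => s ^ 2 * 1) (𝓝[>] 0) (𝓝 0) :=
    ((continuous_pow 2).mul continuous_const).tendsto' 0 0 (by simp) |>.mono_left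
      nhdsWithin_le_nhds
  have hrest : Tendsto (fun s => s ^ 2 * (exp (u s + v s) + exp (v s) - exp (u s)))
      (𝓝[>] 0) (𝓝 0) := by
    have huv : (fun t => exp (u t + v t)) =O[𝓝[>] 0] (fun _ => (1 : ℝ)) := by
      simpa only [exp_add, mul_one] using heu.mul hev
    exact ((isBigO_refl (fun s : ℝ => s ^ 2) _).mul ((huv.add hev).sub heu)).trans_tendsto hsq
  have := ((hu.add_const 2).mul (hv.add_const 2)).add hrest
  rwa [add_zero] at this

theorem stmt5 (N₁ N₂ : ℕ) (u v : ℝ → ℝ)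
    (hu : ContDiffOn ℝ 2 u (Set.Ioi 0)) (hv : ContDiffOn ℝ 2 v (Set.Ioi 0))
    (hODEu : ∀ r > (0 : ℝ),
      deriv (fun s => s * deriv u s) r = -(r * Real.exp (v r) * (Real.exp (u r) + 1)))
    (hODEv : ∀ r > (0 : ℝ),
      deriv (fun s => s * deriv v s) r = -(r * Real.exp (u r) * (Real.exp (v r) - 1)))
    (hu0 : ∃ C ε, 0 < ε ∧ ∀ r ∈ Set.Ioo (0 : ℝ) ε, |u r - 2 * N₁ * Real.log r| ≤ C)
    (hv0 : ∃ C ε, 0 < ε ∧ ∀ r ∈ Set.Ioo (0 : ℝ) ε, |v r - 2 * N₂ * Real.log r| ≤ C) :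
    ∀ r > (0 : ℝ),
      2 * ∫ t in (0 : ℝ)..r, t * Real.exp (u t + v t)
        = 4 * (N₁ + 1) * (N₂ + 1)
          - (r * deriv u r + 2) * (r * deriv v r + 2)
          - r ^ 2 * (Real.exp (u r + v r) + Real.exp (v r) - Real.exp (u r)) := by
  intro r hr
  obtain ⟨C₁, ε₁, hε₁, hlogu⟩ := hu0
  obtain ⟨C₂, ε₂, hε₂, hlogv⟩ := hv0
  replace hlogu := eventually_of_mem (Ioo_mem_nhdsGT hε₁) hlogu
  replace hlogv := eventually_of_mem (Ioo_mem_nhdsGT hε₂) hlogv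
  have heu := isBigO_exp_one_of_abs_sub_mul_log_le (by positivity) hlogu
  have hev := isBigO_exp_one_of_abs_sub_mul_log_le (by positivity) hlogv
  have hid : (fun t : ℝ => t) =O[𝓝[>] 0] (fun _ => (1 : ℝ)) :=
    (tendsto_id.mono_left nhdsWithin_le_nhds).isBigO_one ℝ
  have hwu : Tendsto (fun s => s * deriv u s) (𝓝[>] 0) (𝓝 (2 * N₁)) := by
    refine tendsto_mul_deriv_of_abs_sub_mul_log_le hu ?_ hlogu
    refine IsBigO.congr' ?_ (eventually_nhdsWithin_of_forall fun t ht => (hODEu t ht).symm)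
      EventuallyEq.rfl
    simpa using ((hid.mul hev).mul (heu.add (isBigO_refl _ _))).neg_left
  have hwv : Tendsto (fun s => s * deriv v s) (𝓝[>] 0) (𝓝 (2 * N₂)) := by
    refine tendsto_mul_deriv_of_abs_sub_mul_log_le hv ?_ hlogv
    refine IsBigO.congr' ?_ (eventually_nhdsWithin_of_forall fun t ht => (hODEv t ht).symm)
      EventuallyEq.rfl
    simpa using ((hid.mul heu).mul (hev.sub (isBigO_refl _ _))).neg_left
  have hderiv : ∀ x ∈ Ioc 0 r, HasDerivAt (-pohozaev u v) (2 * (x * exp (u x + v x))) x :=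
    fun x hx => by
      simpa [mul_assoc] using
        (hasDerivAt_pohozaev hx.1 hu hv (hODEu x hx.1) (hODEv x hx.1)).neg
  have key := integral_eq_sub_of_hasDerivAt_of_nonneg_of_tendsto hr hderiv
    (fun x hx => by have := hx.1.le; positivity) (tendsto_pohozaev hwu hwv heu hev).neg
  rw [intervalIntegral.integral_const_mul] at key
  rw [key, Pi.neg_apply, pohozaev]
  ring
end

section
/- Let (u,v) be a radial solution of -(ru')' = r e^v(e^u+1), -(rv')' = r e^u(e^v-1) on (0,∞) with u - 2N₁ ln r and v - 2N₂ ln r bounded near 0. Then ∫₀^∞ r e^{u+v} dr < ∞ and ∫₀^∞ r e^u dr < ∞. -/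
/-!
Near `0` the logarithmic singularities have nonnegative strength, so `u` and `v` are bounded above
and both integrands are bounded. At infinity everything is read off the fluxes `r u'` and `r v'`:
integrating the equations from `1` gives
`r u' = u'(1) - ∫₁ʳ (s e^{u+v} + s e^v)` and `r v' = v'(1) - ∫₁ʳ s e^{u+v} + ∫₁ʳ s e^u`.
If `r w' → -∞` then `w + 3 log r` eventually decreases, so `r e^w = O(r⁻²)` is integrable at
infinity; if `w' ≥ 0` eventually, then `r e^w` is bounded below and is not.

If `∫ (s e^{u+v} + s e^v) = ∞`, then `r u' → -∞` and `r e^u` is integrable. Otherwise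
`s e^{u+v}` and `s e^v` are integrable, and a divergent `∫ s e^u` would give `r v' → +∞`, contradicting the
integrability of `s e^v`. Once `s e^u` is integrable, a divergent `∫ s e^{u+v}` would send both
`r u'` and `r v'`, hence `r (u + v)'`, to `-∞`, which makes `r e^{u+v}` integrable after all.
-/

open MeasureTheory Real Set Filter Topology Asymptotics

section IntegrableAtTop

variable {φ : ℝ → ℝ} {a : ℝ}

theorem stronglyMeasurableAtFilter_atTop_of_continuousOn (hφ : ContinuousOn φ (Ici a)) :
    StronglyMeasurableAtFilter φ atTop :=
  ⟨Ici a, Ici_mem_atTop a, hφ.aestronglyMeasurable measurableSet_Ici⟩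

theorem integrableOn_Ioi_of_integrableAtFilter_atTop (h : IntegrableAtFilter φ atTop)
    (hφ : ContinuousOn φ (Ici a)) : IntegrableOn φ (Ioi a) :=
  (integrableOn_Ici_iff_integrableAtFilter_atTop.2
    ⟨h, hφ.locallyIntegrableOn measurableSet_Ici⟩).mono_set Ioi_subset_Ici_self

theorem exists_tendsto_intervalIntegral_of_integrableAtFilter_atTop
    (h : IntegrableAtFilter φ atTop) (hφ : ContinuousOn φ (Ici a)) :
    ∃ I, Tendsto (fun r => ∫ x in a..r, φ x) atTop (𝓝 I) :=
  ⟨_, intervalIntegral_tendsto_integral_Ioi a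
    (integrableOn_Ioi_of_integrableAtFilter_atTop h hφ) tendsto_id⟩

theorem tendsto_intervalIntegral_atTop_of_not_integrableAtFilter (hφ : ContinuousOn φ (Ici a))
    (hφ0 : ∀ x ≥ a, 0 ≤ φ x) (h : ¬ IntegrableAtFilter φ atTop) :
    Tendsto (fun r => ∫ x in a..r, φ x) atTop atTop := by
  refine tendsto_atTop.2 fun M => ?_
  by_contra hM
  refine h ⟨Ioi a, Ioi_mem_atTop a, integrableOn_Ioi_of_intervalIntegral_norm_bounded M a
    (fun r => (hφ.mono Icc_subset_Ici_self).integrableOn_Icc.mono_set Ioc_subset_Icc_self)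
    tendsto_id ?_⟩
  filter_upwards [eventually_ge_atTop a] with r hr
  obtain ⟨r', hrr', hr'⟩ := frequently_atTop.1 (not_eventually.1 hM) r
  calc ∫ x in a..r, ‖φ x‖ = ∫ x in a..r, φ x :=
        intervalIntegral.integral_congr fun x hx =>
          norm_of_nonneg (hφ0 x (by rw [uIcc_of_le hr] at hx; exact hx.1))
    _ ≤ ∫ x in a..r', φ x :=
        intervalIntegral.integral_mono_interval le_rfl hr hrr'
          ((ae_restrict_iff' measurableSet_Ioc).2 (.of_forall fun x hx => hφ0 x hx.1.le))
          ((hφ.mono Icc_subset_Ici_self).intervalIntegrable_of_Icc (hr.trans hrr'))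
    _ ≤ M := (not_le.1 hr').le

theorem integrableAtFilter_atTop_of_le {ψ : ℝ → ℝ} (hψ : IntegrableAtFilter ψ atTop)
    (hφ : StronglyMeasurableAtFilter φ atTop) (h : ∀ᶠ r in atTop, 0 ≤ φ r ∧ φ r ≤ ψ r) :
    IntegrableAtFilter φ atTop :=
  (IsBigO.of_bound 1 (h.mono fun r hr => by
    rw [one_mul, norm_of_nonneg hr.1]; exact hr.2.trans (le_norm_self _))).integrableAtFilter hφ hψ

theorem not_integrableAtFilter_atTop_of_eventually_const_le {c : ℝ} (hc : 0 < c)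
    (h : ∀ᶠ r in atTop, c ≤ φ r) : ¬ IntegrableAtFilter φ atTop := by
  intro hφ
  have hconst : IntegrableAtFilter (fun _ : ℝ => c) atTop :=
    integrableAtFilter_atTop_of_le hφ stronglyMeasurable_const.stronglyMeasurableAtFilter
      (h.mono fun r hr => ⟨hc.le, hr⟩)
  obtain ⟨b, hb⟩ := integrableAtFilter_atTop_iff.1 hconst
  simp [integrableOn_const_iff, hc.ne'] at hb

end IntegrableAtTop

section Growth

variable {w : ℝ → ℝ}

theorem antitoneOn_add_mul_log (hw : DifferentiableOn ℝ w (Ioi 0)) {R k : ℝ} (hR : 0 < R)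
    (hk : ∀ r ≥ R, r * deriv w r ≤ -k) : AntitoneOn (fun r => w r + k * log r) (Ici R) := by
  have hsub : Ici R ⊆ Ioi 0 := Ici_subset_Ioi.2 hR
  have hdiff : DifferentiableOn ℝ (fun r => w r + k * log r) (Ici R) :=
    (hw.mono hsub).add ((differentiableOn_log.mono fun x hx => (hsub hx).ne').const_mul k)
  refine antitoneOn_of_deriv_nonpos (convex_Ici R) hdiff.continuousOn
    (hdiff.mono interior_subset) fun r hr => ?_
  rw [interior_Ici] at hr
  have hr0 : 0 < r := hR.trans hr
  rw [((hw.differentiableAt (Ioi_mem_nhds hr0)).hasDerivAt.fun_add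
    ((hasDerivAt_log hr0.ne').const_mul k)).deriv]
  calc deriv w r + k * r⁻¹ = (r * deriv w r + k) / r := by field_simp
    _ ≤ 0 := div_nonpos_of_nonpos_of_nonneg (by linarith [hk r hr.le]) hr0.le

theorem integrableAtFilter_mul_exp_atTop (hw : DifferentiableOn ℝ w (Ioi 0))
    (h : Tendsto (fun r => r * deriv w r) atTop atBot) :
    IntegrableAtFilter (fun r => r * exp (w r)) atTop := by
  obtain ⟨R, hR⟩ := eventually_atTop.1 ((h.eventually_le_atBot (-3)).and (eventually_gt_atTop 0))
  have hR0 : 0 < R := (hR R le_rfl).2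
  have hanti := antitoneOn_add_mul_log hw hR0 fun r hr => (hR r hr).1
  have hbound : ∀ r ≥ R, ‖r * exp (w r)‖ ≤ exp (w R + 3 * log R) * ‖r ^ (-2 : ℝ)‖ := by
    intro r hr
    have hr0 : 0 < r := hR0.trans_le hr
    rw [norm_of_nonneg (by positivity), norm_of_nonneg (by positivity), rpow_def_of_pos hr0,
      ← exp_add]
    calc r * exp (w r) = exp ((w r + 3 * log r) + log r * (-2)) := by
          rw [show w r + 3 * log r + log r * (-2) = log r + w r by ring, exp_add, exp_log hr0]
      _ ≤ _ := exp_le_exp.2 (by linarith [hanti self_mem_Ici hr hr])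
  exact (IsBigO.of_bound _ (eventually_atTop.2 ⟨R, hbound⟩)).integrableAtFilter
    (stronglyMeasurableAtFilter_atTop_of_continuousOn
      ((continuousOn_id.mul hw.continuousOn.rexp).mono (Ici_subset_Ioi.2 hR0)))
    (integrableAtFilter_rpow_atTop_iff.2 (by norm_num))

theorem not_integrableAtFilter_mul_exp_atTop (hw : DifferentiableOn ℝ w (Ioi 0))
    (h : ∀ᶠ r in atTop, 0 ≤ deriv w r) :
    ¬ IntegrableAtFilter (fun r => r * exp (w r)) atTop := by
  obtain ⟨R, hR⟩ := eventually_atTop.1 (h.and (eventually_ge_atTop 1))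
  have hR1 : 1 ≤ R := (hR R le_rfl).2
  have hsub : Ici R ⊆ Ioi 0 := Ici_subset_Ioi.2 (by linarith)
  have hmono : MonotoneOn w (Ici R) :=
    monotoneOn_of_deriv_nonneg (convex_Ici R) (hw.mono hsub).continuousOn
      ((hw.mono hsub).mono interior_subset)
      fun r hr => (hR r (interior_subset hr)).1
  refine not_integrableAtFilter_atTop_of_eventually_const_le (exp_pos (w R))
    (eventually_atTop.2 ⟨R, fun r hr => ?_⟩)
  calc exp (w R) ≤ 1 * exp (w r) := by
        rw [one_mul]; exact exp_le_exp.2 (hmono self_mem_Ici hr hr)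
    _ ≤ r * exp (w r) := by gcongr; linarith

theorem integrableAtFilter_mul_exp_nhdsGT_zero (hw : ContinuousOn w (Ioi 0)) {C : ℝ}
    (h : ∀ᶠ r in 𝓝[>] 0, w r ≤ C) :
    IntegrableAtFilter (fun r => r * exp (w r)) (𝓝[>] 0) := by
  refine Measure.FiniteAtFilter.integrableAtFilter
    ((continuousOn_id.mul hw.rexp).stronglyMeasurableAtFilter_nhdsWithin measurableSet_Ioi 0)
    (Measure.finiteAt_nhdsWithin _ _ _) (isBoundedUnder_of_eventually_le (a := exp C) ?_)
  filter_upwards [h, Ioo_mem_nhdsGT one_pos] with r hr hr1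
  calc ‖r * exp (w r)‖ = r * exp (w r) := norm_of_nonneg (mul_nonneg hr1.1.le (exp_pos _).le)
    _ ≤ 1 * exp C := by gcongr; exact hr1.2.le
    _ = exp C := one_mul _

theorem integrableOn_mul_exp_Ioi_zero (hw : ContinuousOn w (Ioi 0)) {C : ℝ}
    (h0 : ∀ᶠ r in 𝓝[>] 0, w r ≤ C) (hinf : IntegrableAtFilter (fun r => r * exp (w r)) atTop) :
    IntegrableOn (fun r => r * exp (w r)) (Ioi 0) :=
  integrableOn_Ioi_iff_integrableAtFilter_atTop_nhdsWithin.2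
    ⟨hinf, integrableAtFilter_mul_exp_nhdsGT_zero hw h0,
      (continuousOn_id.mul hw.rexp).locallyIntegrableOn measurableSet_Ioi⟩

theorem eventually_le_of_abs_sub_mul_log_le {c C ε : ℝ} (hc : 0 ≤ c) (hε : 0 < ε)
    (h : ∀ r ∈ Ioo 0 ε, |w r - c * log r| ≤ C) : ∀ᶠ r in 𝓝[>] 0, w r ≤ C := by
  filter_upwards [Ioo_mem_nhdsGT hε, Ioo_mem_nhdsGT one_pos] with r hr hr1
  have hlog : c * log r ≤ 0 := mul_nonpos_of_nonneg_of_nonpos hc (log_nonpos hr1.1.le hr1.2.le)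
  linarith [(abs_le.1 (h r hr)).2]

end Growth

theorem Filter.Tendsto.const_sub_atTop {α G : Type*} [AddCommGroup G] [PartialOrder G]
    [IsOrderedAddMonoid G] {l : Filter α} {F : α → G} (c : G) (h : Tendsto F l atTop) :
    Tendsto (fun x => c - F x) l atBot := by
  simpa only [sub_eq_add_neg, Function.comp_apply] using
    tendsto_atBot_add_const_left l c (tendsto_neg_atTop_atBot.comp h)

theorem mul_deriv_eq_add_intervalIntegral {w g : ℝ → ℝ}
    (hw : DifferentiableOn ℝ (deriv w) (Ioi 0))
    (hg : ContinuousOn g (Ioi 0)) (hode : ∀ r > 0, deriv (fun s => s * deriv w s) r = g r)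
    {a b : ℝ} (ha : 0 < a) (hb : 0 < b) : b * deriv w b = a * deriv w a + ∫ s in a..b, g s := by
  have hab : uIcc a b ⊆ Ioi 0 := ordConnected_Ioi.uIcc_subset ha hb
  have hderiv : ∀ r ∈ uIcc a b, HasDerivAt (fun s => s * deriv w s) (g r) r := fun r hr => by
    rw [← hode r (hab hr)]
    exact (differentiableAt_id.mul (hw.differentiableAt (Ioi_mem_nhds (hab hr)))).hasDerivAt
  rw [intervalIntegral.integral_eq_sub_of_hasDerivAt hderiv (hg.mono hab).intervalIntegrable]
  ring

section RadialSystem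

variable {u v : ℝ → ℝ}

theorem mul_deriv_eq_sub_intervalIntegral_of_ode_fst (hu : ContDiffOn ℝ 2 u (Ioi 0))
    (hv : ContinuousOn v (Ioi 0))
    (hODE : ∀ r > (0 : ℝ), deriv (fun s => s * deriv u s) r = -(r * exp (v r) * (exp (u r) + 1))) :
    ∀ r ≥ 1, r * deriv u r = deriv u 1 - ∫ s in 1..r, (s * exp (u s + v s) + s * exp (v s)) := by
  intro r hr
  have hcu := hu.continuousOn
  rw [mul_deriv_eq_add_intervalIntegral (g := fun s => -(s * exp (v s) * (exp (u s) + 1)))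
    ((hu.deriv_of_isOpen (m := 1) isOpen_Ioi (by norm_num)).differentiableOn one_ne_zero)
    (by fun_prop) hODE one_pos (by linarith), intervalIntegral.integral_neg, one_mul,
    ← sub_eq_add_neg]
  congr 2 with s
  rw [exp_add]
  ring

theorem mul_deriv_eq_sub_intervalIntegral_of_ode_snd (hv : ContDiffOn ℝ 2 v (Ioi 0))
    (hu : ContinuousOn u (Ioi 0))
    (hODE : ∀ r > (0 : ℝ), deriv (fun s => s * deriv v s) r = -(r * exp (u r) * (exp (v r) - 1))) :
    ∀ r ≥ 1, r * deriv v r =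
      deriv v 1 - (∫ s in 1..r, s * exp (u s + v s)) + ∫ s in 1..r, s * exp (u s) := by
  intro r hr
  have hcv := hv.continuousOn
  have hIcc : Icc 1 r ⊆ Ioi 0 := (Icc_subset_Ioi_iff hr).2 one_pos
  rw [mul_deriv_eq_add_intervalIntegral (g := fun s => -(s * exp (u s) * (exp (v s) - 1)))
    ((hv.deriv_of_isOpen (m := 1) isOpen_Ioi (by norm_num)).differentiableOn one_ne_zero)
    (by fun_prop) hODE one_pos (by linarith), one_mul, sub_add_eq_add_sub, add_sub_assoc,
    ← intervalIntegral.integral_sub]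
  · congr 2 with s
    rw [exp_add]
    ring
  all_goals
    exact ContinuousOn.intervalIntegrable_of_Icc hr (ContinuousOn.mono (by fun_prop) hIcc)

theorem integrableAtFilter_mul_exp_atTop_of_flux (hu : DifferentiableOn ℝ u (Ioi 0))
    (hv : DifferentiableOn ℝ v (Ioi 0))
    (hU : ∀ r ≥ 1, r * deriv u r =
      deriv u 1 - ∫ s in 1..r, (s * exp (u s + v s) + s * exp (v s)))
    (hV : ∀ r ≥ 1, r * deriv v r =
      deriv v 1 - (∫ s in 1..r, s * exp (u s + v s)) + ∫ s in 1..r, s * exp (u s)) :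
    IntegrableAtFilter (fun r => r * exp (u r)) atTop := by
  have hcu : ContinuousOn u (Ici 1) := hu.continuousOn.mono (Ici_subset_Ioi.2 one_pos)
  have hcv : ContinuousOn v (Ici 1) := hv.continuousOn.mono (Ici_subset_Ioi.2 one_pos)
  by_cases hP : IntegrableAtFilter (fun s => s * exp (u s + v s) + s * exp (v s)) atTop
  · have hf : IntegrableAtFilter (fun s => s * exp (u s + v s)) atTop :=
      integrableAtFilter_atTop_of_le hP
        (stronglyMeasurableAtFilter_atTop_of_continuousOn (a := 1) (by fun_prop))
        ((eventually_gt_atTop 0).mono fun s hs =>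
          ⟨by positivity, le_add_of_nonneg_right (by positivity)⟩)
    have hh : IntegrableAtFilter (fun s => s * exp (v s)) atTop :=
      integrableAtFilter_atTop_of_le hP
        (stronglyMeasurableAtFilter_atTop_of_continuousOn (a := 1) (by fun_prop))
        ((eventually_gt_atTop 0).mono fun s hs =>
          ⟨by positivity, le_add_of_nonneg_left (by positivity)⟩)
    by_contra hg
    obtain ⟨I, hI⟩ := exists_tendsto_intervalIntegral_of_integrableAtFilter_atTop hf (by fun_prop)
    have hG := tendsto_intervalIntegral_atTop_of_not_integrableAtFilter (a := 1) (by fun_prop)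
      (fun s hs => mul_nonneg (by linarith) (exp_pos _).le) hg
    have hv' : Tendsto (fun r => r * deriv v r) atTop atTop :=
      (tendsto_congr' (eventually_atTop.2 ⟨1, hV⟩)).2 ((tendsto_const_nhds.sub hI).add_atTop hG)
    refine not_integrableAtFilter_mul_exp_atTop hv ?_ hh
    filter_upwards [hv'.eventually_ge_atTop 0, eventually_gt_atTop 0] with r hr hr0
    exact (mul_nonneg_iff_of_pos_left hr0).1 hr
  · have hP' := tendsto_intervalIntegral_atTop_of_not_integrableAtFilter (a := 1) (by fun_prop)
      (fun s hs => add_nonneg (mul_nonneg (by linarith) (exp_pos _).le)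
        (mul_nonneg (by linarith) (exp_pos _).le)) hP
    exact integrableAtFilter_mul_exp_atTop hu
      ((tendsto_congr' (eventually_atTop.2 ⟨1, hU⟩)).2 (hP'.const_sub_atTop _))

theorem integrableAtFilter_mul_exp_add_atTop_of_flux (hu : DifferentiableOn ℝ u (Ioi 0))
    (hv : DifferentiableOn ℝ v (Ioi 0))
    (hU : ∀ r ≥ 1, r * deriv u r =
      deriv u 1 - ∫ s in 1..r, (s * exp (u s + v s) + s * exp (v s)))
    (hV : ∀ r ≥ 1, r * deriv v r =
      deriv v 1 - (∫ s in 1..r, s * exp (u s + v s)) + ∫ s in 1..r, s * exp (u s))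
    (hg : IntegrableAtFilter (fun r => r * exp (u r)) atTop) :
    IntegrableAtFilter (fun r => r * exp (u r + v r)) atTop := by
  have hcu : ContinuousOn u (Ici 1) := hu.continuousOn.mono (Ici_subset_Ioi.2 one_pos)
  have hcv : ContinuousOn v (Ici 1) := hv.continuousOn.mono (Ici_subset_Ioi.2 one_pos)
  by_contra hf
  have hF := tendsto_intervalIntegral_atTop_of_not_integrableAtFilter (a := 1) (by fun_prop)
    (fun s hs => mul_nonneg (by linarith) (exp_pos _).le) hf
  obtain ⟨I, hI⟩ := exists_tendsto_intervalIntegral_of_integrableAtFilter_atTop hg (by fun_prop)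
  have hP : ¬ IntegrableAtFilter (fun s => s * exp (u s + v s) + s * exp (v s)) atTop :=
    fun hP => hf (integrableAtFilter_atTop_of_le hP
      (stronglyMeasurableAtFilter_atTop_of_continuousOn (a := 1) (by fun_prop))
      ((eventually_gt_atTop 0).mono fun s hs =>
        ⟨by positivity, le_add_of_nonneg_right (by positivity)⟩))
  have hP' := tendsto_intervalIntegral_atTop_of_not_integrableAtFilter (a := 1) (by fun_prop)
    (fun s hs => add_nonneg (mul_nonneg (by linarith) (exp_pos _).le)
      (mul_nonneg (by linarith) (exp_pos _).le)) hP
  have hu' : Tendsto (fun r => r * deriv u r) atTop atBot :=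
    (tendsto_congr' (eventually_atTop.2 ⟨1, hU⟩)).2 (hP'.const_sub_atTop _)
  have hv' : Tendsto (fun r => r * deriv v r) atTop atBot :=
    (tendsto_congr' (eventually_atTop.2 ⟨1, hV⟩)).2 ((hF.const_sub_atTop _).atBot_add hI)
  refine hf (integrableAtFilter_mul_exp_atTop (hu.add hv) ((hu'.atBot_add_atBot hv').congr' ?_))
  filter_upwards [eventually_gt_atTop 0] with r hr
  rw [deriv_fun_add (hu.differentiableAt (Ioi_mem_nhds hr))
    (hv.differentiableAt (Ioi_mem_nhds hr))]
  ring

end RadialSystem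

theorem stmt6 (N₁ N₂ : ℕ) (u v : ℝ → ℝ)
    (hu : ContDiffOn ℝ 2 u (Set.Ioi 0)) (hv : ContDiffOn ℝ 2 v (Set.Ioi 0))
    (hODEu : ∀ r > (0 : ℝ),
      deriv (fun s => s * deriv u s) r = -(r * Real.exp (v r) * (Real.exp (u r) + 1)))
    (hODEv : ∀ r > (0 : ℝ),
      deriv (fun s => s * deriv v s) r = -(r * Real.exp (u r) * (Real.exp (v r) - 1)))
    (hu0 : ∃ C ε, 0 < ε ∧ ∀ r ∈ Set.Ioo (0 : ℝ) ε, |u r - 2 * N₁ * Real.log r| ≤ C)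
    (hv0 : ∃ C ε, 0 < ε ∧ ∀ r ∈ Set.Ioo (0 : ℝ) ε, |v r - 2 * N₂ * Real.log r| ≤ C) :
    IntegrableOn (fun t => t * Real.exp (u t + v t)) (Set.Ioi 0) ∧
    IntegrableOn (fun t => t * Real.exp (u t)) (Set.Ioi 0) := by
  obtain ⟨C₁, ε₁, hε₁, hC₁⟩ := hu0
  obtain ⟨C₂, ε₂, hε₂, hC₂⟩ := hv0
  have hu₁ : DifferentiableOn ℝ u (Ioi 0) := hu.differentiableOn (by norm_num)
  have hv₁ : DifferentiableOn ℝ v (Ioi 0) := hv.differentiableOn (by norm_num)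
  have hU := mul_deriv_eq_sub_intervalIntegral_of_ode_fst hu hv₁.continuousOn hODEu
  have hV := mul_deriv_eq_sub_intervalIntegral_of_ode_snd hv hu₁.continuousOn hODEv
  have hu_le := eventually_le_of_abs_sub_mul_log_le (by positivity) hε₁ hC₁
  have hv_le := eventually_le_of_abs_sub_mul_log_le (by positivity) hε₂ hC₂
  have hg := integrableAtFilter_mul_exp_atTop_of_flux hu₁ hv₁ hU hV
  have hf := integrableAtFilter_mul_exp_add_atTop_of_flux hu₁ hv₁ hU hV hg
  exact ⟨integrableOn_mul_exp_Ioi_zero (hu₁.continuousOn.add hv₁.continuousOn)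
      ((hu_le.and hv_le).mono fun r h => add_le_add h.1 h.2) hf,
    integrableOn_mul_exp_Ioi_zero hu₁.continuousOn hu_le hg⟩
end

section
/- Let v : (0,∞) → ℝ satisfy the radial system with u, and let F₂(r) = ∫₀^r t e^{u(t)}(e^{v(t)}-1) dt. Suppose v(r) < 0 for all r > 0. Then a contradiction follows; i.e., every solution v of the system -(rv')' = r e^u(e^v-1) with v(r) - 2N₂ ln r bounded near 0 must vanish at some r₀ > 0. -/
/-!
Suppose `v` has no zero. Near `0` we have `v ≈ 2 N₂ log r → -∞`, so by continuity `v < 0`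
everywhere; then `(r v')' = r eᵘ (1 - eᵛ) > 0`, so `r v'` is strictly increasing. As `v` is not
antitone (it tends to `-∞` at `0`), `a v'(a) = g > 0` for some `a`, whence
`v r ≥ v a + g log (r / a) → ∞`, contradicting `v < 0`.
-/

open Real Filter Topology Set

lemma tendsto_nhdsGT_zero_atBot_of_abs_sub_mul_log_le {v : ℝ → ℝ} {c C ε : ℝ} (hc : 0 < c)
    (hε : 0 < ε) (h : ∀ r ∈ Ioo 0 ε, |v r - c * log r| ≤ C) :
    Tendsto v (𝓝[>] 0) atBot := by
  have hle : v ≤ᶠ[𝓝[>] 0] fun r => c * log r + C := by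
    filter_upwards [Ioo_mem_nhdsGT hε] with r hr
    linarith [(abs_le.mp (h r hr)).2]
  exact tendsto_atBot_mono' _ hle
    (tendsto_atBot_add_const_right _ C (tendsto_log_nhdsGT_zero.const_mul_atBot hc))

lemma neg_of_tendsto_nhdsGT_zero_atBot {v : ℝ → ℝ} (hcont : ContinuousOn v (Ioi 0))
    (hlim : Tendsto v (𝓝[>] 0) atBot) (hne : ∀ r > 0, v r ≠ 0) {r : ℝ} (hr : 0 < r) :
    v r < 0 := by
  by_contra! hvr
  obtain ⟨s, hvs, hs⟩ := ((hlim.eventually (eventually_lt_atBot 0)).and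
    self_mem_nhdsWithin).exists
  obtain ⟨t, ht, hvt⟩ := isPreconnected_Ioi.intermediate_value hs hr hcont ⟨hvs.le, hvr⟩
  exact hne t ht hvt

lemma exists_deriv_pos_of_tendsto_nhdsGT_zero_atBot {v : ℝ → ℝ}
    (hdiff : DifferentiableOn ℝ v (Ioi 0)) (hlim : Tendsto v (𝓝[>] 0) atBot) :
    ∃ a > 0, 0 < deriv v a := by
  by_contra! hnonpos
  have hanti : AntitoneOn v (Ioi 0) :=
    antitoneOn_of_deriv_nonpos (convex_Ioi 0) hdiff.continuousOn
      (by rwa [interior_Ioi]) (by rwa [interior_Ioi])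
  obtain ⟨s, hvs, hs⟩ := ((hlim.eventually (eventually_lt_atBot (v 1))).and
    (Ioo_mem_nhdsGT one_pos)).exists
  exact hvs.not_ge (hanti hs.1 (mem_Ioi.mpr one_pos) hs.2.le)

lemma tendsto_atTop_of_le_mul_deriv {v : ℝ → ℝ} {a g : ℝ} (ha : 0 < a) (hg : 0 < g)
    (hdiff : DifferentiableOn ℝ v (Ici a)) (hvg : ∀ r > a, g ≤ r * deriv v r) :
    Tendsto v atTop atTop := by
  have hmono : MonotoneOn (fun r => v r - g * log r) (Ici a) := by
    have hdiff' : DifferentiableOn ℝ (fun r => v r - g * log r) (Ici a) :=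
      hdiff.sub ((differentiableOn_log.mono fun r (hr : r ∈ Ici a) => (ha.trans_le hr).ne').const_mul g)
    refine monotoneOn_of_deriv_nonneg (convex_Ici a) hdiff'.continuousOn
      (hdiff'.mono interior_subset) fun r hr => ?_
    rw [interior_Ici] at hr
    have hr0 : 0 < r := ha.trans hr
    have hvr : DifferentiableAt ℝ v r := hdiff.differentiableAt (Ici_mem_nhds hr)
    rw [deriv_fun_sub hvr ((differentiableAt_log hr0.ne').const_mul g),
      deriv_const_mul _ (differentiableAt_log hr0.ne'), deriv_log, sub_nonneg,
      ← div_eq_mul_inv, div_le_iff₀ hr0, mul_comm]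
    exact hvg r hr
  have hle : (fun r => g * log r + (v a - g * log a)) ≤ᶠ[atTop] v := by
    filter_upwards [eventually_ge_atTop a] with r hr
    linarith [hmono self_mem_Ici hr hr]
  exact tendsto_atTop_mono' _ hle
    (tendsto_atTop_add_const_right _ _ (tendsto_log_atTop.const_mul_atTop hg))

theorem stmt9_general (N₂ : ℕ) (hN₂ : 1 ≤ N₂) (u v : ℝ → ℝ)
    (hv : ContDiffOn ℝ 2 v (Set.Ioi 0))
    (hODEv : ∀ r > (0 : ℝ),
      deriv (fun s => s * deriv v s) r = -(r * Real.exp (u r) * (Real.exp (v r) - 1)))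
    (hv0 : ∃ C ε, 0 < ε ∧ ∀ r ∈ Set.Ioo (0 : ℝ) ε, |v r - 2 * N₂ * Real.log r| ≤ C) :
    ∃ r₀ > (0 : ℝ), v r₀ = 0 := by
  by_contra! hne
  obtain ⟨C, ε, hε, hC⟩ := hv0
  have hlim0 : Tendsto v (𝓝[>] 0) atBot :=
    tendsto_nhdsGT_zero_atBot_of_abs_sub_mul_log_le (mul_pos two_pos (Nat.cast_pos.mpr hN₂)) hε hC
  have hdiff : DifferentiableOn ℝ v (Ioi 0) := hv.differentiableOn (by norm_num)
  have hneg : ∀ r > 0, v r < 0 := fun r hr =>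
    neg_of_tendsto_nhdsGT_zero_atBot hdiff.continuousOn hlim0 hne hr
  have hmono : StrictMonoOn (fun s => s * deriv v s) (Ioi 0) := by
    refine strictMonoOn_of_deriv_pos (convex_Ioi 0)
      (continuousOn_id.mul (hv.continuousOn_deriv_of_isOpen isOpen_Ioi (by norm_num)))
      fun r hr => ?_
    rw [interior_Ioi] at hr
    have hexp : exp (v r) - 1 < 0 := sub_neg.mpr (exp_lt_one_iff.mpr (hneg r hr))
    rw [hODEv r hr]
    exact neg_pos.mpr (mul_neg_of_pos_of_neg (mul_pos hr (exp_pos _)) hexp)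
  obtain ⟨a, ha, hva⟩ := exists_deriv_pos_of_tendsto_nhdsGT_zero_atBot hdiff hlim0
  have hlim : Tendsto v atTop atTop :=
    tendsto_atTop_of_le_mul_deriv ha (mul_pos ha hva) (hdiff.mono fun r hr => ha.trans_le hr)
      fun r hr => (hmono ha (ha.trans hr) hr).le
  obtain ⟨r, hvr, hr⟩ := ((hlim.eventually (eventually_ge_atTop 0)).and
    (eventually_gt_atTop 0)).exists
  exact (hneg r hr).not_ge hvr

theorem stmt9 (N₁ N₂ : ℕ) (hN₂ : 1 ≤ N₂) (u v : ℝ → ℝ)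
    (hu : ContDiffOn ℝ 2 u (Set.Ioi 0)) (hv : ContDiffOn ℝ 2 v (Set.Ioi 0))
    (hODEu : ∀ r > (0 : ℝ),
      deriv (fun s => s * deriv u s) r = -(r * Real.exp (v r) * (Real.exp (u r) + 1)))
    (hODEv : ∀ r > (0 : ℝ),
      deriv (fun s => s * deriv v s) r = -(r * Real.exp (u r) * (Real.exp (v r) - 1)))
    (hu0 : ∃ C ε, 0 < ε ∧ ∀ r ∈ Set.Ioo (0 : ℝ) ε, |u r - 2 * N₁ * Real.log r| ≤ C)
    (hv0 : ∃ C ε, 0 < ε ∧ ∀ r ∈ Set.Ioo (0 : ℝ) ε, |v r - 2 * N₂ * Real.log r| ≤ C) :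
    ∃ r₀ > (0 : ℝ), v r₀ = 0 :=
  stmt9_general N₂ hN₂ u v hv hODEv hv0
end
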